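/- Let L, b > 0. For γ ∈ (0, π/2), set R₀(γ) = L/sin γ and R₁(γ) = L/sin γ + b, and for each integer m ≥ 1 define E_m(γ) = −(cos²(mγ)·sin γ/(32π²·sin⁴(mγ))) · (1/(R₀(γ)²·cos γ) − 1/(R₁(γ)²·cos((m−1)γ)·cos(mγ))) if mγ < π/2, and E_m(γ) = 0 if mγ ≥ π/2. Then the sum Σ_{m=1}^{∞} E_m(γ) (a finite sum for each γ) tends to −π²·b/(1440·L³) as γ tends to 0 from the right. -/

import Mathlib

open Real Filter Topology

/-- The closed `2m`-bounce contribution `E_m(γ)` to the optical-approximation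
Casimir energy between a finite plate of length `b` and an infinite plane
meeting it at opening angle `γ`, with fixed minimum separation `L`, where
`R₀(γ) = L/sin γ` and `R₁(γ) = L/sin γ + b`; it is declared to vanish when
`mγ ≥ π/2` (no closed `2m`-bounce path exists then). -/
noncomputable def casimirTerm (L b : ℝ) (m : ℕ) (γ : ℝ) : ℝ :=
  if (m : ℝ) * γ < π / 2 then
    -(Real.cos ((m : ℝ) * γ) ^ 2 * Real.sin γ / (32 * π ^ 2 * Real.sin ((m : ℝ) * γ) ^ 4)) *
      (1 / ((L / Real.sin γ) ^ 2 * Real.cos γ) -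
        1 / ((L / Real.sin γ + b) ^ 2 * Real.cos (((m : ℝ) - 1) * γ) * Real.cos ((m : ℝ) * γ)))
  else 0

/-! Each term `E_m(γ)` is a difference of two quantities of order `1/γ`. Writing
`cos γ = cos((m-1)γ) cos(mγ) + sin((m-1)γ) sin(mγ)` exposes the cancellation and splits
`E_m(γ)` into a leading part tending to `-b/(16π²L³m⁴)` and a remainder tending to `0`. By Jordan's
inequality `sin x ≥ 2x/π` on `[0, π/2]`, both parts are bounded by `C/m²` uniformly for
`γ ∈ (0, 1]`, so Tannery's theorem passes the limit through the sum, and `Σ 1/m⁴ = π⁴/90`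
gives the value. -/

lemma sin_eq_mul_sinc (x : ℝ) : sin x = x * sinc x := by
  rcases eq_or_ne x 0 with rfl | hx
  · simp
  · rw [sinc_of_ne_zero hx, mul_div_cancel₀ _ hx]

lemma tendsto_sin_mul_div_sin_mul (a : ℝ) {c : ℝ} (hc : c ≠ 0) :
    Tendsto (fun x => sin (a * x) / sin (c * x)) (𝓝[≠] 0) (𝓝 (a / c)) := by
  have hcont : ContinuousAt (fun x => a * sinc (a * x) / (c * sinc (c * x))) 0 := by
    fun_prop (disch := simpa using hc)
  have key := hcont.tendsto.mono_left (nhdsWithin_le_nhds (s := {0}ᶜ))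
  simp only [mul_zero, sinc_zero, mul_one] at key
  refine key.congr' (eventually_nhdsWithin_of_forall fun x (hx : x ≠ 0) => ?_)
  dsimp only
  rw [sin_eq_mul_sinc (a * x), sin_eq_mul_sinc (c * x), mul_comm a x, mul_comm c x,
    mul_assoc, mul_assoc, mul_div_mul_left _ _ hx]

lemma sin_div_sin_mul_le {M x : ℝ} (hM : 0 < M) (hx : 0 ≤ x) (h : M * x ≤ π / 2) :
    sin x / sin (M * x) ≤ π / (2 * M) := by
  rcases hx.eq_or_lt with rfl | hx
  · simp only [sin_zero, zero_div]
    positivity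
  have hjordan := mul_le_sin (by positivity) h
  rw [div_le_iff₀ (lt_of_lt_of_le (by positivity) hjordan)]
  calc sin x ≤ x := sin_le hx.le
    _ = π / (2 * M) * (2 / π * (M * x)) := by field_simp
    _ ≤ π / (2 * M) * sin (M * x) := by gcongr

lemma cos_div_cos_le_one {x y : ℝ} (hx : 0 ≤ x) (hxy : x ≤ y) (hy : y < π / 2) :
    cos y / cos x ≤ 1 :=
  div_le_one_of_le₀ (cos_le_cos_of_nonneg_of_le_pi hx (by linarith) hxy)
    (cos_nonneg_of_mem_Icc ⟨by linarith, by linarith⟩)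

lemma tendsto_cos_succ_mul_div_cos_mul (m : ℕ) :
    Tendsto (fun γ => cos ((m + 1) * γ) / cos (m * γ)) (𝓝[≠] 0) (𝓝 1) := by
  have hcont : ContinuousAt (fun γ => cos ((m + 1) * γ) / cos (m * γ)) 0 := by
    fun_prop (disch := simp)
  simpa using hcont.tendsto.mono_left nhdsWithin_le_nhds

lemma tendsto_sin_div_sin_succ_mul (m : ℕ) :
    Tendsto (fun γ => sin γ / sin ((m + 1) * γ)) (𝓝[≠] 0) (𝓝 (1 / (m + 1))) := by
  simpa only [one_mul] using tendsto_sin_mul_div_sin_mul 1 (by positivity : (m + 1 : ℝ) ≠ 0)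

lemma hasSum_one_div_succ_pow_four :
    HasSum (fun n : ℕ => 1 / ((n : ℝ) + 1) ^ 4) (π ^ 4 / 90) := by
  simpa using (hasSum_nat_add_iff' 1).mpr hasSum_zeta_four

lemma summable_div_succ_sq (C : ℝ) : Summable (fun n : ℕ => C / ((n : ℝ) + 1) ^ 2) := by
  simpa [div_eq_mul_inv] using
    ((summable_nat_add_iff 1).mpr (Real.summable_nat_pow_inv.mpr one_lt_two)).mul_left C

lemma hasSum_neg_div_succ_pow_four (L b : ℝ) :
    HasSum (fun m : ℕ => -b / (16 * π ^ 2 * L ^ 3 * (m + 1) ^ 4))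
      (-(π ^ 2 * b) / (1440 * L ^ 3)) := by
  have hterm : (fun m : ℕ => -b / (16 * π ^ 2 * L ^ 3 * (m + 1) ^ 4))
      = fun m : ℕ => -b / (16 * π ^ 2 * L ^ 3) * (1 / ((m : ℝ) + 1) ^ 4) := by
    ext m
    field_simp
  rw [hterm, show -(π ^ 2 * b) / (1440 * L ^ 3) = -b / (16 * π ^ 2 * L ^ 3) * (π ^ 4 / 90) by
    field_simp; ring]
  exact hasSum_one_div_succ_pow_four.mul_left _

noncomputable def leadingTerm (L b : ℝ) (m : ℕ) (γ : ℝ) : ℝ :=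
  -(b * (2 * L + b * sin γ) / (32 * π ^ 2 * L ^ 2 * (L + b * sin γ) ^ 2)) *
    (cos ((m + 1) * γ) / cos (m * γ)) * (sin γ / sin ((m + 1) * γ)) ^ 4

noncomputable def remainderTerm (L : ℝ) (m : ℕ) (γ : ℝ) : ℝ :=
  cos ((m + 1) * γ) / cos (m * γ) * (sin γ / sin ((m + 1) * γ)) ^ 2 *
    (sin (m * γ) / sin ((m + 1) * γ)) * sin γ / (32 * π ^ 2 * L ^ 2 * cos γ)

section

variable {L b γ : ℝ} {m : ℕ}

lemma casimirTerm_succ_eq (hL : 0 < L) (hb : 0 ≤ b) (hγ : 0 < γ) (h : (m + 1) * γ < π / 2) :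
    casimirTerm L b (m + 1) γ = leadingTerm L b m γ + remainderTerm L m γ := by
  have hmγ : m * γ < (m + 1) * γ := by nlinarith
  have hm : 0 ≤ (m : ℝ) * γ := by positivity
  have hs : 0 < sin γ := sin_pos_of_pos_of_lt_pi hγ (by nlinarith)
  have hc : 0 < cos γ := cos_pos_of_mem_Ioo ⟨by linarith, by nlinarith⟩
  have hcm : 0 < cos (m * γ) := cos_pos_of_mem_Ioo ⟨by linarith, by linarith⟩
  have hcM : 0 < cos ((m + 1) * γ) := cos_pos_of_mem_Ioo ⟨by linarith, h⟩
  have hLb : 0 < L + b * sin γ := by positivity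
  have hcos : cos γ = cos (m * γ) * cos ((m + 1) * γ) + sin (m * γ) * sin ((m + 1) * γ) := by
    rw [← cos_sub, add_mul, one_mul, sub_add_cancel_left, cos_neg]
  rw [casimirTerm, if_pos (by push_cast; exact h), leadingTerm, remainderTerm]
  push_cast
  rw [add_sub_cancel_right]
  field_simp
  rw [hcos]
  ring

lemma abs_leadingTerm_le (hL : 0 < L) (hb : 0 ≤ b) (hγ : 0 < γ) (h : (m + 1) * γ < π / 2) :
    |leadingTerm L b m γ| ≤ b * (2 * L + b) * π ^ 2 / (512 * L ^ 4) / (m + 1) ^ 4 := by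
  have hm : 0 ≤ (m : ℝ) * γ := by positivity
  have hmγ : m * γ ≤ (m + 1) * γ := by nlinarith
  have hs : 0 < sin γ := sin_pos_of_pos_of_lt_pi hγ (by nlinarith)
  have hS : 0 < sin ((m + 1) * γ) := sin_pos_of_pos_of_lt_pi (by positivity) (by linarith)
  have hcm : 0 < cos (m * γ) := cos_pos_of_mem_Ioo ⟨by linarith, by linarith⟩
  have hcM : 0 < cos ((m + 1) * γ) := cos_pos_of_mem_Ioo ⟨by linarith, h⟩
  have hprefactor : b * (2 * L + b * sin γ) / (32 * π ^ 2 * L ^ 2 * (L + b * sin γ) ^ 2)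
      ≤ b * (2 * L + b) / (32 * π ^ 2 * L ^ 2 * L ^ 2) := by
    gcongr
    · exact mul_le_of_le_one_right hb (sin_le_one γ)
    · nlinarith [mul_nonneg hb hs.le]
  rw [leadingTerm, abs_mul, abs_mul, abs_neg, abs_of_nonneg (by positivity),
    abs_of_nonneg (by positivity), abs_of_nonneg (by positivity)]
  calc _ ≤ b * (2 * L + b) / (32 * π ^ 2 * L ^ 2 * L ^ 2) * 1 * (π / (2 * (m + 1))) ^ 4 := by
        gcongr ?_ * ?_ * ?_ ^ 4
        · exact cos_div_cos_le_one hm hmγ h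
        · exact sin_div_sin_mul_le (by positivity) hγ.le h.le
    _ = _ := by field_simp; ring

lemma abs_remainderTerm_le (hL : 0 < L) (hγ : 0 < γ) (hγ₁ : γ ≤ 1)
    (h : (m + 1) * γ < π / 2) :
    |remainderTerm L m γ| ≤ 1 / (64 * L ^ 2) / (m + 1) ^ 2 := by
  have hm : 0 ≤ (m : ℝ) * γ := by positivity
  have hmγ : m * γ ≤ (m + 1) * γ := by nlinarith
  have hs : 0 < sin γ := sin_pos_of_pos_of_lt_pi hγ (by nlinarith)
  have hS : 0 < sin ((m + 1) * γ) := sin_pos_of_pos_of_lt_pi (by positivity) (by linarith)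
  have hSm : 0 ≤ sin (m * γ) := sin_nonneg_of_nonneg_of_le_pi hm (by linarith)
  have hcm : 0 < cos (m * γ) := cos_pos_of_mem_Ioo ⟨by linarith, by linarith⟩
  have hcM : 0 < cos ((m + 1) * γ) := cos_pos_of_mem_Ioo ⟨by linarith, h⟩
  have hc : 1 / 2 ≤ cos γ := by nlinarith [one_sub_sq_div_two_le_cos (x := γ)]
  rw [remainderTerm, abs_of_nonneg (by positivity)]
  calc _ ≤ 1 * (π / (2 * (m + 1))) ^ 2 * 1 * 1 / (32 * π ^ 2 * L ^ 2 * (1 / 2)) := by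
        gcongr ?_ * ?_ ^ 2 * ?_ * ?_ / (_ * ?_)
        · exact cos_div_cos_le_one hm hmγ h
        · exact sin_div_sin_mul_le (by positivity) hγ.le h.le
        · exact div_le_one_of_le₀
            (sin_le_sin_of_le_of_le_pi_div_two (by linarith) h.le hmγ) hS.le
        · exact sin_le_one γ
    _ = _ := by field_simp; ring

end

section

variable {L : ℝ}

lemma tendsto_leadingTerm (b : ℝ) (m : ℕ) (hL : L ≠ 0) :
    Tendsto (leadingTerm L b m) (𝓝[≠] 0)
      (𝓝 (-b / (16 * π ^ 2 * L ^ 3 * (m + 1) ^ 4))) := by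
  have hprefactor : ContinuousAt
      (fun γ => -(b * (2 * L + b * sin γ) / (32 * π ^ 2 * L ^ 2 * (L + b * sin γ) ^ 2))) 0 := by
    fun_prop (disch := simp [hL, pi_ne_zero])
  unfold leadingTerm
  have hlim := ((hprefactor.tendsto.mono_left nhdsWithin_le_nhds).mul
    (tendsto_cos_succ_mul_div_cos_mul m)).mul ((tendsto_sin_div_sin_succ_mul m).pow 4)
  convert hlim using 2
  simp only [sin_zero, mul_zero, add_zero]
  field_simp
  ring

lemma tendsto_remainderTerm (m : ℕ) (hL : L ≠ 0) :
    Tendsto (remainderTerm L m) (𝓝[≠] 0) (𝓝 0) := by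
  have hsin : Tendsto sin (𝓝[≠] 0) (𝓝 0) :=
    (continuous_sin.tendsto' 0 0 sin_zero).mono_left nhdsWithin_le_nhds
  have hcos : Tendsto cos (𝓝[≠] 0) (𝓝 1) :=
    (continuous_cos.tendsto' 0 1 cos_zero).mono_left nhdsWithin_le_nhds
  have hlim := ((((tendsto_cos_succ_mul_div_cos_mul m).mul
    ((tendsto_sin_div_sin_succ_mul m).pow 2)).mul
    (tendsto_sin_mul_div_sin_mul m (by positivity : (m + 1 : ℝ) ≠ 0))).mul hsin).div
    (hcos.const_mul (32 * π ^ 2 * L ^ 2)) (by simp [hL, pi_ne_zero])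
  simp only [mul_zero, zero_div] at hlim
  exact hlim

end

section

variable {L b : ℝ}

lemma tendsto_casimirTerm_succ (hL : 0 < L) (hb : 0 ≤ b) (m : ℕ) :
    Tendsto (fun γ => casimirTerm L b (m + 1) γ) (𝓝[>] 0)
      (𝓝 (-b / (16 * π ^ 2 * L ^ 3 * (m + 1) ^ 4))) := by
  have hlim := ((tendsto_leadingTerm b m hL.ne').add (tendsto_remainderTerm m hL.ne')).mono_left
    (nhdsGT_le_nhdsNE (0 : ℝ))
  rw [add_zero] at hlim
  refine hlim.congr' ?_
  filter_upwards [Ioo_mem_nhdsGT (by positivity : (0 : ℝ) < π / (2 * (m + 1)))]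
    with γ ⟨hγ, hγ'⟩
  have h : (m + 1) * γ < π / 2 := by
    rw [lt_div_iff₀' (by positivity)] at hγ'
    linarith
  exact (casimirTerm_succ_eq hL hb hγ h).symm

lemma abs_casimirTerm_succ_le (hL : 0 < L) (hb : 0 ≤ b) {γ : ℝ} (hγ : 0 < γ) (hγ₁ : γ ≤ 1)
    (m : ℕ) : |casimirTerm L b (m + 1) γ| ≤
      (1 / (64 * L ^ 2) + b * (2 * L + b) * π ^ 2 / (512 * L ^ 4)) / (m + 1) ^ 2 := by
  by_cases h : (m + 1) * γ < π / 2
  · have hpow : b * (2 * L + b) * π ^ 2 / (512 * L ^ 4) / (m + 1) ^ 4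
        ≤ b * (2 * L + b) * π ^ 2 / (512 * L ^ 4) / (m + 1) ^ 2 :=
      div_le_div_of_nonneg_left (by positivity) (by positivity)
        (pow_le_pow_right₀ (by simp) (by norm_num))
    rw [casimirTerm_succ_eq hL hb hγ h, add_div]
    calc _ ≤ |leadingTerm L b m γ| + |remainderTerm L m γ| := abs_add_le _ _
      _ ≤ _ := by
        linarith [abs_leadingTerm_le hL hb hγ h, abs_remainderTerm_le hL hγ hγ₁ h]
  · rw [casimirTerm, if_neg (by push_cast; exact h), abs_zero]
    positivity

end

/-- In the parallel-plate limit `γ → 0⁺`, the total even-bounce optical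
Casimir energy `Σ_{m=1}^∞ E_m(γ)` (a finite sum for each `γ`) tends to
Casimir's parallel-plate energy `−π²b/(1440 L³)`. -/
theorem casimir_parallel_plate_limit (L b : ℝ) (hL : 0 < L) (hb : 0 < b) :
    Filter.Tendsto (fun γ : ℝ => ∑' m : ℕ, casimirTerm L b (m + 1) γ)
      (𝓝[>] (0 : ℝ)) (𝓝 (-(π ^ 2 * b) / (1440 * L ^ 3))) := by
  have hbound : ∀ᶠ γ in 𝓝[>] 0, ∀ m : ℕ, ‖casimirTerm L b (m + 1) γ‖ ≤
      (1 / (64 * L ^ 2) + b * (2 * L + b) * π ^ 2 / (512 * L ^ 4)) / (m + 1) ^ 2 := by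
    filter_upwards [Ioc_mem_nhdsGT one_pos] with γ ⟨hγ, hγ₁⟩ m
    exact abs_casimirTerm_succ_le hL hb.le hγ hγ₁ m
  have hlim := tendsto_tsum_of_dominated_convergence (summable_div_succ_sq _)
    (tendsto_casimirTerm_succ hL hb.le) hbound
  rwa [(hasSum_neg_div_succ_pow_four L b).tsum_eq] at hlim
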